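/- arXiv:0706.1003 — 3 statements merged into one kernel-verified Lean document; each statement's English description precedes it below -/
import Mathlib

section
/- For any vector t = (t_1,...,t_n) of positive reals and any δ > 0, there exist arbitrarily large real numbers q and integers p_1,...,p_n such that |q·t_i − p_i| < δ for all i = 1,...,n. -/
/-- Pigeonhole: simultaneous Diophantine approximation with a positive integer q. -/
lemma cutler_aux (n : ℕ) (t : Fin n → ℝ) (ε : ℝ) (hε : 0 < ε) :
    ∃ q : ℕ, 1 ≤ q ∧ ∃ p : Fin n → ℤ, ∀ i, |(q : ℝ) * t i - (p i : ℝ)| < ε := by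
  set B : ℕ := ⌈1/ε⌉₊ + 1 with hBdef
  have hB0 : (0:ℝ) < B := by positivity
  have hBε : 1 / (B:ℝ) < ε := by
    rw [div_lt_iff₀ hB0]
    have h1 : 1/ε ≤ (⌈1/ε⌉₊ : ℝ) := Nat.le_ceil _
    have h2 : ((⌈1/ε⌉₊ : ℝ)) < B := by
      rw [hBdef]; push_cast; linarith
    calc (1:ℝ) = ε * (1/ε) := by field_simp
      _ ≤ ε * ⌈1/ε⌉₊ := by gcongr
      _ < ε * B := by gcongr
  have hg : ∀ (k : ℕ) (i : Fin n), ⌊Int.fract ((k:ℝ) * t i) * B⌋₊ < B := by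
    intro k i
    have hf0 : 0 ≤ Int.fract ((k:ℝ) * t i) := Int.fract_nonneg _
    have hf1 : Int.fract ((k:ℝ) * t i) < 1 := Int.fract_lt_one _
    rw [Nat.floor_lt (by positivity)]
    nlinarith
  let g : ℕ → (Fin n → Fin B) := fun k i => ⟨⌊Int.fract ((k:ℝ) * t i) * B⌋₊, hg k i⟩
  obtain ⟨a, b, hab, hgab⟩ := Finite.exists_ne_map_eq_of_infinite g
  wlog hlt : a < b generalizing a b
  · exact this b a hab.symm hgab.symm (by omega)
  refine ⟨b - a, by omega, fun i => ⌊(b:ℝ) * t i⌋ - ⌊(a:ℝ) * t i⌋, fun i => ?_⟩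
  have hfloor : ⌊Int.fract ((a:ℝ) * t i) * B⌋₊ = ⌊Int.fract ((b:ℝ) * t i) * B⌋₊ := by
    have := congrFun hgab i
    simpa [g, Fin.ext_iff] using this
  -- both fract values are within 1/B of each other
  have key : |Int.fract ((b:ℝ) * t i) - Int.fract ((a:ℝ) * t i)| < 1 / B := by
    set x := Int.fract ((a:ℝ) * t i) * B with hx
    set y := Int.fract ((b:ℝ) * t i) * B with hy
    have hx0 : 0 ≤ x := mul_nonneg (Int.fract_nonneg _) hB0.le
    have hy0 : 0 ≤ y := mul_nonneg (Int.fract_nonneg _) hB0.le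
    have h1 : (⌊x⌋₊ : ℝ) ≤ x := Nat.floor_le hx0
    have h2 : x < ⌊x⌋₊ + 1 := Nat.lt_floor_add_one x
    have h3 : (⌊y⌋₊ : ℝ) ≤ y := Nat.floor_le hy0
    have h4 : y < ⌊y⌋₊ + 1 := Nat.lt_floor_add_one y
    have hxy : |y - x| < 1 := by
      rw [abs_lt]
      have : (⌊x⌋₊ : ℝ) = (⌊y⌋₊ : ℝ) := by exact_mod_cast congrArg Nat.cast hfloor
      constructor <;> nlinarith
    have hBB : (1/(B:ℝ)) * B = 1 := by field_simp
    rw [abs_lt] at hxy ⊢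
    constructor <;> nlinarith [hxy.1, hxy.2, hB0, hBB]
  have hfa : Int.fract ((a:ℝ) * t i) = (a:ℝ) * t i - ⌊(a:ℝ) * t i⌋ := rfl
  have hfb : Int.fract ((b:ℝ) * t i) = (b:ℝ) * t i - ⌊(b:ℝ) * t i⌋ := rfl
  have hcast : ((b - a : ℕ) : ℝ) = (b:ℝ) - a := by
    push_cast [Nat.cast_sub hlt.le]; ring
  show |((b - a : ℕ) : ℝ) * t i - ((⌊(b:ℝ) * t i⌋ - ⌊(a:ℝ) * t i⌋ : ℤ) : ℝ)| < ε
  have heq : ((b - a : ℕ) : ℝ) * t i - ((⌊(b:ℝ) * t i⌋ - ⌊(a:ℝ) * t i⌋ : ℤ) : ℝ)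
      = Int.fract ((b:ℝ) * t i) - Int.fract ((a:ℝ) * t i) := by
    rw [hcast, hfa, hfb]; push_cast; ring
  rw [heq]
  exact key.trans hBε

/-- For any vector of positive reals `t` and any `δ > 0`, there exist arbitrarily
large reals `q` and integers `p i` with `|q * t i - p i| < δ` for all `i`. -/
theorem cutler_recurrence (n : ℕ) (t : Fin n → ℝ) (ht : ∀ i, 0 < t i)
    (δ : ℝ) (hδ : 0 < δ) (T : ℝ) :
    ∃ q : ℝ, T < q ∧ ∃ p : Fin n → ℤ, ∀ i, |q * t i - (p i : ℝ)| < δ := by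
  set m : ℕ := ⌊max T 0⌋₊ + 1 with hm
  have hm0 : (0:ℝ) < m := by positivity
  have hmT : T < m := by
    have : (max T 0 : ℝ) < m := by
      rw [hm]; push_cast; exact Nat.lt_floor_add_one _
    exact lt_of_le_of_lt (le_max_left _ _) this
  obtain ⟨q0, hq0, p0, hp0⟩ := cutler_aux n t (δ / m) (by positivity)
  refine ⟨(m * q0 : ℕ), ?_, fun i => m * p0 i, fun i => ?_⟩
  · have hq1 : (1:ℝ) ≤ (q0:ℝ) := by exact_mod_cast hq0
    have hc : ((m * q0 : ℕ) : ℝ) = (m:ℝ) * (q0:ℝ) := by push_cast; ring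
    rw [hc]; nlinarith
  · have h := hp0 i
    have : ((m * q0 : ℕ) : ℝ) * t i - ((m * p0 i : ℤ) : ℝ)
        = (m:ℝ) * ((q0:ℝ) * t i - (p0 i : ℝ)) := by push_cast; ring
    rw [this, abs_mul, abs_of_pos hm0]
    calc (m:ℝ) * |(q0:ℝ) * t i - (p0 i : ℝ)| < (m:ℝ) * (δ / m) := by gcongr
      _ = δ := by field_simp
end

section
/- For any t = (t_1,...,t_n) ∈ R^n and any δ > 0, the set of real numbers q such that |q·t_i − p_i| < δ for some integers p_i (for all i) has positive lower density in [0,∞); that is, liminf_{T→∞} (1/T)·Leb({q ∈ [0,T] : dist(q·t, Z^n) < δ}) > 0. -/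
/-!
The orbit `q ↦ q t` is a continuous homomorphism `φ : ℝ → 𝕋ⁿ` into a compact group. Covering the
compact closure of its range by finitely many sets `φ s + B(δ/2)` shows that the times `q` with
`φ q ∈ B(δ/2)` are syndetic: every window `[a, a + L]` contains one. By continuity of `φ` at `0`,
each such time starts an interval of fixed length `ε` of times with `φ q ∈ B(δ)`, so every window
of length `L + ε` carries measure `≥ ε` of good times, and the lower density is at least
`ε / (2 (L + ε))`.
-/

open MeasureTheory Filter Set Metric Topology

section Syndetic

variable {A G : Type*} [AddGroup G] [TopologicalSpace G] [IsTopologicalAddGroup G] [CompactSpace G]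

theorem AddMonoidHom.exists_finset_forall_exists_map_sub_mem [AddGroup A] (φ : A →+ G)
    {U : Set G} (hU : U ∈ 𝓝 0) : ∃ F : Finset A, ∀ a, ∃ s ∈ F, φ (a - s) ∈ U := by
  let V : A → Set G := fun s => (· - φ s) ⁻¹' interior U
  have hV : ∀ s, IsOpen (V s) := fun s => isOpen_interior.preimage (continuous_sub_right _)
  have hcover : closure (Set.range φ) ⊆ ⋃ s, V s := by
    intro x hx
    have hxU : x - x ∈ interior U := by rwa [sub_self, mem_interior_iff_mem_nhds]
    obtain ⟨_, hsx, s, rfl⟩ :=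
      mem_closure_iff.1 hx _ (isOpen_interior.preimage (continuous_sub_left x)) hxU
    exact mem_iUnion.2 ⟨s, hsx⟩
  obtain ⟨F, hF⟩ := isClosed_closure.isCompact.elim_finite_subcover V hV hcover
  refine ⟨F, fun a => ?_⟩
  obtain ⟨s, hs, has⟩ := mem_iUnion₂.1 (hF (subset_closure (mem_range_self a)))
  exact ⟨s, hs, map_sub φ a s ▸ interior_subset has⟩

theorem AddMonoidHom.exists_forall_exists_mem_Icc_map_mem [AddCommGroup A] [LinearOrder A]
    [IsOrderedAddMonoid A] (φ : A →+ G) {U : Set G} (hU : U ∈ 𝓝 0) :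
    ∃ L, ∀ a, ∃ q ∈ Icc a (a + L), φ q ∈ U := by
  obtain ⟨F, hF⟩ := φ.exists_finset_forall_exists_map_sub_mem hU
  have hFne : F.Nonempty := let ⟨s, hs, _⟩ := hF 0; ⟨s, hs⟩
  refine ⟨F.max' hFne - F.min' hFne, fun a => ?_⟩
  obtain ⟨s, hs, hsU⟩ := hF (a + F.max' hFne)
  refine ⟨a + (F.max' hFne - s), ⟨?_, ?_⟩, by rwa [← add_sub_assoc]⟩
  · exact le_add_of_nonneg_right (sub_nonneg.2 (F.le_max' s hs))
  · exact add_le_add_right (sub_le_sub_left (F.min'_le s hs) _) a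

end Syndetic

theorem MeasureTheory.Measure.natCast_mul_le_measure_Ico (μ : Measure ℝ) {ε : ENNReal} {D : ℝ}
    (hD : 0 ≤ D) (h : ∀ a, ε ≤ μ (Ico a (a + D))) (m : ℕ) : m * ε ≤ μ (Ico 0 (m * D)) := by
  induction m with
  | zero => simp
  | succ m ih =>
    have hmD : 0 ≤ (m : ℝ) * D := by positivity
    calc ((m + 1 : ℕ) : ENNReal) * ε = m * ε + ε := by push_cast; ring
      _ ≤ μ (Ico 0 (m * D)) + μ (Ico (m * D) (m * D + D)) := add_le_add ih (h _)
      _ = μ (Ico 0 ((m + 1 : ℕ) * D)) := by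
        rw [← measure_union Ico_disjoint_Ico_same measurableSet_Ico,
          Ico_union_Ico_eq_Ico hmD (by linarith)]
        push_cast; ring_nf

theorem toReal_volume_Icc_inter_le (S : Set ℝ) {T : ℝ} (hT : 0 ≤ T) :
    (volume (Icc 0 T ∩ S)).toReal ≤ T :=
  ENNReal.toReal_le_of_le_ofReal hT <|
    (measure_mono inter_subset_left).trans_eq (by rw [Real.volume_Icc, sub_zero])

theorem pos_liminf_volume_Icc_inter_div {S : Set ℝ} {D ε : ℝ} (hD : 0 < D) (hε : 0 < ε)
    (h : ∀ a, ENNReal.ofReal ε ≤ volume (Ico a (a + D) ∩ S)) :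
    0 < liminf (fun T => (volume (Icc 0 T ∩ S)).toReal / T) atTop := by
  -- On `volume.restrict S` intervals add up even when `S` is not measurable.
  have hrestrict : ∀ a, ENNReal.ofReal ε ≤ volume.restrict S (Ico a (a + D)) := fun a => by
    rw [Measure.restrict_apply measurableSet_Ico]; exact h a
  have hlower : ∀ T, 2 * D ≤ T → ε / (2 * D) ≤ (volume (Icc 0 T ∩ S)).toReal / T := by
    intro T hT
    set m := ⌊T / D⌋₊
    have hmD : m * D ≤ T := (le_div_iff₀ hD).1 (Nat.floor_le (div_nonneg (by linarith) hD.le))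
    have hTm : T / D < m + 1 := Nat.lt_floor_add_one _
    have hvol : ENNReal.ofReal (m * ε) ≤ volume (Icc 0 T ∩ S) := calc
      ENNReal.ofReal (m * ε) = m * ENNReal.ofReal ε := by
        rw [ENNReal.ofReal_mul (Nat.cast_nonneg m), ENNReal.ofReal_natCast]
      _ ≤ volume.restrict S (Ico 0 (m * D)) :=
        (volume.restrict S).natCast_mul_le_measure_Ico hD.le hrestrict m
      _ ≤ volume.restrict S (Icc 0 T) := measure_mono (Ico_subset_Icc_self.trans
        (Icc_subset_Icc_right hmD))
      _ = volume (Icc 0 T ∩ S) := Measure.restrict_apply measurableSet_Icc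
    have hfin : volume (Icc 0 T ∩ S) ≠ ⊤ :=
      ((measure_mono inter_subset_left).trans_lt measure_Icc_lt_top).ne
    have hTpos : 0 < T := by linarith
    have hm : T / (2 * D) ≤ m := by
      rw [div_lt_iff₀ hD] at hTm
      rw [div_le_iff₀ (by positivity)]
      nlinarith
    calc ε / (2 * D) = ε * (T / (2 * D)) / T := by field_simp
      _ ≤ m * ε / T := by rw [mul_comm]; gcongr
      _ ≤ (volume (Icc 0 T ∩ S)).toReal / T :=
        by gcongr; exact (ENNReal.ofReal_le_iff_le_toReal hfin).1 hvol
  have hbdd : IsBoundedUnder (· ≤ ·) atTop fun T => (volume (Icc 0 T ∩ S)).toReal / T :=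
    ⟨1, eventually_map.2 <| (eventually_gt_atTop 0).mono fun T hT =>
      (div_le_one hT).2 (toReal_volume_Icc_inter_le S hT.le)⟩
  exact (show 0 < ε / (2 * D) by positivity).trans_le <| le_liminf_of_le hbdd.isCoboundedUnder_ge
    (eventually_atTop.2 ⟨2 * D, hlower⟩)

theorem UnitAddCircle.norm_coe_lt_iff_exists_int {x δ : ℝ} :
    ‖(x : UnitAddCircle)‖ < δ ↔ ∃ p : ℤ, |x - p| < δ := by
  rw [UnitAddCircle.norm_eq]
  exact ⟨fun h => ⟨round x, h⟩, fun ⟨p, hp⟩ => (round_le x p).trans_lt hp⟩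

noncomputable def linearFlow {ι : Type*} (t : ι → ℝ) : ℝ →+ (ι → UnitAddCircle) :=
  AddMonoidHom.pi fun i => (QuotientAddGroup.mk' _).comp (AddMonoidHom.mulRight (t i))

section LinearFlow

variable {ι : Type*} (t : ι → ℝ)

theorem linearFlow_apply (q : ℝ) (i : ι) : linearFlow t q i = ((q * t i : ℝ) : UnitAddCircle) :=
  rfl

theorem continuous_linearFlow : Continuous (linearFlow t) :=
  continuous_pi fun i => (AddCircle.continuous_mk' 1).comp (continuous_mul_const (t i))

theorem linearFlow_mem_ball_zero_iff [Fintype ι] {δ : ℝ} (hδ : 0 < δ) (q : ℝ) :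
    linearFlow t q ∈ ball 0 δ ↔ ∀ i, ∃ p : ℤ, |q * t i - p| < δ := by
  simp only [mem_ball_zero_iff, pi_norm_lt_iff hδ, linearFlow_apply,
    UnitAddCircle.norm_coe_lt_iff_exists_int]

end LinearFlow

theorem AddMonoidHom.exists_pos_Ico_subset_preimage_ball {G : Type*} [SeminormedAddGroup G]
    (φ : ℝ →+ G) (hφ : Continuous φ) {δ : ℝ} (hδ : 0 < δ) :
    ∃ ε > 0, ∀ q ∈ φ ⁻¹' ball 0 (δ / 2), Ico q (q + ε) ⊆ φ ⁻¹' ball 0 δ := by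
  obtain ⟨ε, hε, hφε⟩ := Metric.continuous_iff.1 hφ 0 (δ / 2) (half_pos hδ)
  refine ⟨ε, hε, fun q hq x hx => ?_⟩
  have hxq : ‖φ (x - q)‖ < δ / 2 := by
    simpa using hφε (x - q) <| by
      rw [Real.dist_eq, sub_zero, abs_lt]; constructor <;> linarith [hx.1, hx.2]
  simp only [mem_preimage, mem_ball_zero_iff] at hq ⊢
  calc ‖φ x‖ = ‖φ (x - q) + φ q‖ := by rw [← map_add, sub_add_cancel]
    _ ≤ ‖φ (x - q)‖ + ‖φ q‖ := norm_add_le _ _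
    _ < δ := by linarith

/-- The set of times `q` at which `q • t` lies within `δ` of the integer lattice
has positive lower density in `[0, ∞)`. -/
theorem near_return_times_positive_lower_density (n : ℕ) (t : Fin n → ℝ)
    (δ : ℝ) (hδ : 0 < δ) :
    0 < liminf (fun T : ℝ =>
      (volume {q : ℝ | q ∈ Set.Icc (0 : ℝ) T ∧
        ∀ i, ∃ p : ℤ, |q * t i - (p : ℝ)| < δ}).toReal / T) atTop := by
  have hset : ∀ T, {q : ℝ | q ∈ Icc 0 T ∧ ∀ i, ∃ p : ℤ, |q * t i - (p : ℝ)| < δ} =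
      Icc 0 T ∩ linearFlow t ⁻¹' ball 0 δ := fun T =>
    Set.ext fun q => and_congr_right fun _ => (linearFlow_mem_ball_zero_iff t hδ q).symm
  simp only [hset]
  obtain ⟨ε, hε, hthick⟩ :=
    (linearFlow t).exists_pos_Ico_subset_preimage_ball (continuous_linearFlow t) hδ
  obtain ⟨L, hL⟩ := (linearFlow t).exists_forall_exists_mem_Icc_map_mem
    (ball_mem_nhds (0 : Fin n → UnitAddCircle) (half_pos hδ))
  have hL0 : 0 ≤ L := by obtain ⟨q, hq, -⟩ := hL 0; linarith [hq.1, hq.2]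
  refine pos_liminf_volume_Icc_inter_div (D := L + ε) (by positivity) hε fun a => ?_
  obtain ⟨q, hq, hqU⟩ := hL a
  calc ENNReal.ofReal ε = volume (Ico q (q + ε)) := by rw [Real.volume_Ico, add_sub_cancel_left]
    _ ≤ volume (Ico a (a + (L + ε)) ∩ linearFlow t ⁻¹' ball 0 δ) :=
      measure_mono fun x hx =>
        ⟨⟨by linarith [hq.1, hx.1], by linarith [hq.2, hx.2]⟩, hthick q hqU hx⟩
end

section
/- Let t_1,...,t_n > 0. If some ratio t_i/t_j is irrational, then for every δ > 0 the set {q > 0 : dist(q t_k, Z) < δ for all k} is unbounded. -/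
/-- If some ratio `tᵢ / tⱼ` is irrational, then for every `δ > 0` the set of
`q > 0` for which every `q * tₖ` is within `δ` of an integer is unbounded. -/
theorem irrational_ratio_near_return_times_unbounded (n : ℕ) (t : Fin n → ℝ)
    (ht : ∀ i, 0 < t i) (hirr : ∃ i j, Irrational (t i / t j)) (δ : ℝ) (hδ : 0 < δ) :
    ¬BddAbove {q : ℝ | 0 < q ∧ ∀ k, ∃ p : ℤ, |q * t k - (p : ℝ)| < δ} := by
  rw [not_bddAbove_iff]
  intro C
  obtain ⟨N, hN⟩ := exists_nat_gt (max C 0)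
  have hNpos : 0 < N := by
    have : (0:ℝ) < N := lt_of_le_of_lt (le_max_right C 0) hN
    exact_mod_cast this
  set M : ℕ := ⌈1/δ⌉₊ with hM
  have hMpos : 0 < M := Nat.ceil_pos.mpr (by positivity)
  have hMR : (0:ℝ) < M := by exact_mod_cast hMpos
  have hMδ : (1:ℝ)/M ≤ δ := by
    rw [div_le_iff₀ hMR]
    have h1 : 1/δ ≤ (M:ℝ) := Nat.le_ceil _
    calc (1:ℝ) = (1/δ) * δ := by field_simp
    _ ≤ M * δ := mul_le_mul_of_nonneg_right h1 hδ.le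
    _ = δ * M := mul_comm _ _
  have hg : ∀ (x : ℝ), ⌊Int.fract x * M⌋.toNat < M := by
    intro x
    have h1 : Int.fract x * M < M := by
      have h2 := Int.fract_lt_one x
      have h3 := Int.fract_nonneg x
      nlinarith
    have h4 : ⌊Int.fract x * M⌋ < (M:ℤ) :=
      Int.floor_lt.mpr (by push_cast; linarith)
    omega
  let g : ℕ → Fin n → Fin M := fun j k => ⟨(⌊Int.fract ((j*N : ℕ) * t k) * M⌋).toNat, hg _⟩
  obtain ⟨j1, j2, hne, heq⟩ := Finite.exists_ne_map_eq_of_infinite g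
  wlog hlt : j1 < j2 generalizing j1 j2
  · exact this j2 j1 hne.symm heq.symm (by omega)
  have hNN : (j1*N : ℕ) + N ≤ (j2*N : ℕ) := by
    have : j1*N + 1*N ≤ j2*N := by rw [← Nat.add_mul]; exact Nat.mul_le_mul_right N hlt
    simpa using this
  have hcast : ((j1*N : ℕ) : ℝ) + N ≤ ((j2*N : ℕ) : ℝ) := by exact_mod_cast hNN
  refine ⟨((j2*N : ℕ) : ℝ) - ((j1*N : ℕ) : ℝ), ⟨?_, ?_⟩, ?_⟩
  · have : (0:ℝ) < N := by exact_mod_cast hNpos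
    linarith
  · intro k
    set a := ((j2*N : ℕ) : ℝ) * t k with ha
    set b := ((j1*N : ℕ) : ℝ) * t k with hb
    refine ⟨⌊a⌋ - ⌊b⌋, ?_⟩
    have key : ⌊Int.fract b * M⌋ = ⌊Int.fract a * M⌋ := by
      have h := congrFun heq k
      simp only [g, Fin.mk.injEq] at h
      rw [← ha, ← hb] at h
      have hnn1 : (0:ℤ) ≤ ⌊Int.fract b * M⌋ :=
        Int.floor_nonneg.mpr (mul_nonneg (Int.fract_nonneg _) hMR.le)
      have hnn2 : (0:ℤ) ≤ ⌊Int.fract a * M⌋ :=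
        Int.floor_nonneg.mpr (mul_nonneg (Int.fract_nonneg _) hMR.le)
      omega
    have hlt1 : |Int.fract b * M - Int.fract a * M| < 1 :=
      Int.abs_sub_lt_one_of_floor_eq_floor key
    have hexp : (((j2*N : ℕ) : ℝ) - ((j1*N : ℕ) : ℝ)) * t k -
        ((⌊a⌋ - ⌊b⌋ : ℤ) : ℝ) = Int.fract a - Int.fract b := by
      simp only [Int.fract, ha, hb]
      push_cast
      ring
    rw [hexp]
    have h2 : |Int.fract a - Int.fract b| * M < 1 := by
      calc |Int.fract a - Int.fract b| * M
          = |(Int.fract b - Int.fract a) * M| := by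
            rw [abs_mul, abs_of_pos hMR, abs_sub_comm]
      _ = |Int.fract b * M - Int.fract a * M| := by ring_nf
      _ < 1 := hlt1
    calc |Int.fract a - Int.fract b| < 1 / M := by
          rw [lt_div_iff₀ hMR]; exact h2
    _ ≤ δ := hMδ
  · have : C < (N:ℝ) := lt_of_le_of_lt (le_max_left C 0) hN
    linarith
end
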